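/- arXiv:1204.2131 — 5 statements merged into one kernel-verified Lean document; each statement's English description precedes it below -/
import Mathlib

section
/- The function f(z) = (-ln(1-z))·(1-z)/z is strictly concave on the interval (0,1); equivalently, its second derivative f''(z) = (-2z + z² - 2·ln(1-z)·(1-z))/((1-z)·z³) is negative for all z ∈ (0,1). -/
/-!
Writing `f(z) = -log(1 - z) (1 - z) / z`, one computes `f'(z) = (z + log(1 - z)) / z²` and
`f''(z) = g(z) / ((1 - z) z³)` with `g(z) = -2z + z² - 2 log(1 - z) (1 - z)`. The numerator
vanishes at `0` and `g'(z) = 2 (z + log(1 - z)) < 0` because `log(1 - z) < -z`, so `g < 0` on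
`(0, 1)`, while the denominator is positive there.
-/

open Set Real

lemma add_log_one_sub_neg {x : ℝ} (hx₀ : x ≠ 0) (hx₁ : x < 1) : x + log (1 - x) < 0 := by
  have := log_lt_sub_one_of_pos (sub_pos.2 hx₁) (by simpa using hx₀)
  linarith

lemma hasDerivAt_log_one_sub {x : ℝ} (hx : x ≠ 1) :
    HasDerivAt (fun z => log (1 - z)) (-(1 - x)⁻¹) x := by
  simpa [div_eq_mul_inv] using
    ((hasDerivAt_id x).const_sub 1).log (sub_ne_zero.2 hx.symm)

lemma hasDerivAt_neg_log_one_sub_mul_one_sub_div {x : ℝ} (hx₀ : x ≠ 0) (hx₁ : x ≠ 1) :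
    HasDerivAt (fun z => -log (1 - z) * (1 - z) / z) ((x + log (1 - x)) / x ^ 2) x := by
  have h1x : 1 - x ≠ 0 := sub_ne_zero.2 hx₁.symm
  refine (((hasDerivAt_log_one_sub hx₁).neg.mul ((hasDerivAt_id x).const_sub 1)).div
    (hasDerivAt_id x) hx₀).congr_deriv ?_
  simp only [Pi.mul_apply, Pi.neg_apply, id]
  field_simp
  ring

lemma hasDerivAt_add_log_one_sub_div_sq {x : ℝ} (hx₀ : x ≠ 0) (hx₁ : x ≠ 1) :
    HasDerivAt (fun z => (z + log (1 - z)) / z ^ 2)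
      ((-2 * x + x ^ 2 - 2 * log (1 - x) * (1 - x)) / ((1 - x) * x ^ 3)) x := by
  have h1x : 1 - x ≠ 0 := sub_ne_zero.2 hx₁.symm
  refine (((hasDerivAt_id x).add (hasDerivAt_log_one_sub hx₁)).div (hasDerivAt_pow 2 x)
    (pow_ne_zero 2 hx₀)).congr_deriv ?_
  simp only [Pi.add_apply, id]
  norm_num
  field_simp
  ring

noncomputable def secondDerivNumerator (z : ℝ) : ℝ := -2 * z + z ^ 2 - 2 * log (1 - z) * (1 - z)

lemma hasDerivAt_secondDerivNumerator {x : ℝ} (hx : x ≠ 1) :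
    HasDerivAt secondDerivNumerator (2 * (x + log (1 - x))) x := by
  have h1x : 1 - x ≠ 0 := sub_ne_zero.2 hx.symm
  refine ((((hasDerivAt_id x).const_mul (-2)).add (hasDerivAt_pow 2 x)).sub
    (((hasDerivAt_log_one_sub hx).const_mul 2).mul ((hasDerivAt_id x).const_sub 1))).congr_deriv ?_
  simp only [id]
  norm_num
  field_simp
  ring

lemma secondDerivNumerator_neg {x : ℝ} (hx : x ∈ Ioo (0 : ℝ) 1) : secondDerivNumerator x < 0 := by
  have hderiv : ∀ y ∈ Ico (0 : ℝ) 1, HasDerivAt secondDerivNumerator (2 * (y + log (1 - y))) y :=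
    fun y hy => hasDerivAt_secondDerivNumerator hy.2.ne
  have hanti : StrictAntiOn secondDerivNumerator (Ico 0 1) := by
    refine strictAntiOn_of_hasDerivWithinAt_neg (convex_Ico 0 1)
      (fun y hy => (hderiv y hy).continuousAt.continuousWithinAt)
      (fun y hy => (hderiv y (interior_subset hy)).hasDerivWithinAt) fun y hy => ?_
    rw [interior_Ico] at hy
    linarith [add_log_one_sub_neg hy.1.ne' hy.2]
  simpa [secondDerivNumerator] using hanti (left_mem_Ico.2 one_pos) (Ioo_subset_Ico_self hx) hx.1

theorem stmt_4 :
    StrictConcaveOn ℝ (Set.Ioo (0:ℝ) 1) (fun z : ℝ => (-Real.log (1 - z)) * (1 - z) / z) ∧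
    ∀ z ∈ Set.Ioo (0:ℝ) 1,
      (-2 * z + z ^ 2 - 2 * Real.log (1 - z) * (1 - z)) / ((1 - z) * z ^ 3) < 0 := by
  have hf'' : ∀ z ∈ Ioo (0 : ℝ) 1,
      (-2 * z + z ^ 2 - 2 * log (1 - z) * (1 - z)) / ((1 - z) * z ^ 3) < 0 := fun z hz =>
    div_neg_of_neg_of_pos (secondDerivNumerator_neg hz)
      (mul_pos (sub_pos.2 hz.2) (pow_pos hz.1 3))
  refine ⟨strictConcaveOn_of_deriv2_neg' (convex_Ioo 0 1) ?_ fun x hx => ?_, hf''⟩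
  · exact fun x hx =>
      (hasDerivAt_neg_log_one_sub_mul_one_sub_div hx.1.ne' hx.2.ne).continuousAt.continuousWithinAt
  · have hf' : deriv (fun z => -log (1 - z) * (1 - z) / z) =ᶠ[nhds x]
        fun z => (z + log (1 - z)) / z ^ 2 := by
      filter_upwards [isOpen_Ioo.mem_nhds hx] with y hy
      exact (hasDerivAt_neg_log_one_sub_mul_one_sub_div hy.1.ne' hy.2.ne).deriv
    rw [Function.iterate_succ_apply, Function.iterate_one, hf'.deriv_eq,
      (hasDerivAt_add_log_one_sub_div_sq hx.1.ne' hx.2.ne).deriv]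
    exact hf'' x hx
end

section
/- For all z ∈ (0,1), (z² - 2z)/(1-z) < 2·ln(1-z). -/
lemma key_aux : ∀ x ∈ Set.Ioo (0:ℝ) 1, x - x⁻¹ < 2 * Real.log x := by
  have hanti : StrictAntiOn (fun x : ℝ => 2 * Real.log x - x + x⁻¹) (Set.Ioc 0 1) := by
    apply strictAntiOn_of_deriv_neg (convex_Ioc 0 1)
    · apply ContinuousOn.add
      · apply ContinuousOn.sub
        · exact continuousOn_const.mul (Real.continuousOn_log.mono
            (fun x (hx : x ∈ Set.Ioc (0:ℝ) 1) => ne_of_gt hx.1))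
        · exact continuousOn_id
      · exact continuousOn_inv₀.mono
          (fun x (hx : x ∈ Set.Ioc (0:ℝ) 1) => ne_of_gt hx.1)
    · intro x hx
      rw [interior_Ioc] at hx
      have hx0 : x ≠ 0 := ne_of_gt hx.1
      have hd : HasDerivAt (fun x : ℝ => 2 * Real.log x - x + x⁻¹)
          (2 * x⁻¹ - 1 + -(x^2)⁻¹) x := by
        exact (((Real.hasDerivAt_log hx0).const_mul 2).sub (hasDerivAt_id x)).add
          (hasDerivAt_inv hx0)
      rw [hd.deriv]
      have h1 : (0:ℝ) < x := hx.1
      have h2 : x < 1 := hx.2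
      have : 2 * x⁻¹ - 1 + -(x^2)⁻¹ = -((x-1)^2) / x^2 := by
        field_simp; ring
      rw [this]
      apply div_neg_of_neg_of_pos
      · nlinarith
      · positivity
  intro x hx
  have := hanti (Set.mem_Ioc.2 ⟨hx.1, le_of_lt hx.2⟩) (Set.mem_Ioc.2 ⟨one_pos, le_refl 1⟩) hx.2
  simp only [Real.log_one, inv_one] at this
  linarith

theorem stmt_5 : ∀ z ∈ Set.Ioo (0:ℝ) 1,
    (z ^ 2 - 2 * z) / (1 - z) < 2 * Real.log (1 - z) := by
  intro z hz
  have h1 : (0:ℝ) < 1 - z := by linarith [hz.2]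
  have h2 : 1 - z < 1 := by linarith [hz.1]
  have hk := key_aux (1 - z) ⟨h1, h2⟩
  have heq : (z ^ 2 - 2 * z) / (1 - z) = (1 - z) - (1 - z)⁻¹ := by
    field_simp
    ring
  rw [heq]; exact hk
end

section
/- The function g₁(z) = ((1-z)/z)·(f(z) - (1-z)), where f(z) = (-ln(1-z))·(1-z)/z, is strictly decreasing on (0,1). Equivalently, for all z ∈ (0,1), ln(1-z) < (z³ + z² - 2z)/(2(1-z)). -/
/-!
Writing `L(z) = -log (1 - z)`, one computes `g₁'(z) = (1 - z) / z³ · (2z + z² - 2L(z))`.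
Since `L(z) = ∑ zⁿ⁺¹ / (n + 1)` has positive terms on `(0, 1)`, truncating after the cubic term
gives `L(z) > z + z² / 2`, so `g₁' < 0`; rearranged, the same bound is the inequality for `log (1 - z)`.
-/

open Real Set

theorem Real.log_one_sub_lt_neg_sub_sq_div_two {x : ℝ} (h0 : 0 < x) (h1 : x < 1) :
    log (1 - x) < -x - x ^ 2 / 2 := by
  have hL := hasSum_pow_div_log_of_abs_lt_one (abs_lt.2 ⟨by linarith, h1⟩)
  have hcubic := sum_le_hasSum (Finset.range 3) (fun n _ => by positivity) hL
  norm_num [Finset.sum_range_succ] at hcubic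
  have : 0 < x ^ 3 := by positivity
  linarith

noncomputable def f (z : ℝ) : ℝ := -log (1 - z) * (1 - z) / z

noncomputable def g₁ (z : ℝ) : ℝ := (1 - z) / z * (f z - (1 - z))

theorem hasDerivAt_g₁ {z : ℝ} (h0 : z ≠ 0) (h1 : z ≠ 1) :
    HasDerivAt g₁ ((1 - z) / z ^ 3 * (2 * z + z ^ 2 + 2 * log (1 - z))) z := by
  have h1' : 1 - z ≠ 0 := sub_ne_zero.2 h1.symm
  have hsub : HasDerivAt (fun z : ℝ => 1 - z) (-1) z := (hasDerivAt_id' z).const_sub 1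
  have hL : HasDerivAt (fun z : ℝ => -log (1 - z)) (-(-1 / (1 - z))) z := (hsub.log h1').neg
  have hf : HasDerivAt f _ z := (hL.mul hsub).div (hasDerivAt_id' z) h0
  have hg : HasDerivAt g₁ _ z := (hsub.div (hasDerivAt_id' z) h0).mul (hf.sub hsub)
  convert hg using 1
  simp only [f, Pi.div_apply, Pi.mul_apply]
  field_simp
  ring

theorem strictAntiOn_g₁ : StrictAntiOn g₁ (Ioo 0 1) := by
  have hderiv : ∀ z ∈ Ioo (0 : ℝ) 1, HasDerivAt g₁ _ z :=
    fun z hz => hasDerivAt_g₁ hz.1.ne' hz.2.ne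
  refine strictAntiOn_of_deriv_neg (convex_Ioo 0 1)
    (fun z hz => (hderiv z hz).continuousAt.continuousWithinAt) (fun z hz => ?_)
  rw [interior_Ioo] at hz
  rw [(hderiv z hz).deriv]
  obtain ⟨h0, h1⟩ := hz
  have := log_one_sub_lt_neg_sub_sq_div_two h0 h1
  exact mul_neg_of_pos_of_neg (div_pos (by linarith) (by positivity)) (by linarith)

theorem stmt_12 :
    StrictAntiOn
      (fun z : ℝ => ((1 - z) / z) * ((-Real.log (1 - z)) * (1 - z) / z - (1 - z)))
      (Set.Ioo 0 1) ∧
    ∀ z ∈ Set.Ioo (0:ℝ) 1,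
      Real.log (1 - z) < (z ^ 3 + z ^ 2 - 2 * z) / (2 * (1 - z)) := by
  refine ⟨strictAntiOn_g₁, ?_⟩
  rintro z ⟨h0, h1⟩
  have h1' : 1 - z ≠ 0 := by linarith
  convert log_one_sub_lt_neg_sub_sq_div_two h0 h1 using 1
  field_simp
  ring
end

section
/- Let 3 ≤ a < b be integers, f(z) = (-ln(1-z))·(1-z)/z, and g(z) = f(z)·(b-1)·(a-1) + 1/(1-z) + 2 - b - a. If z ∈ (0,1) satisfies f(z) ≥ 1/(a-1), then g(z) > 0. -/
/-!
Write `A = a - 1`, `B = b - 1` and `t = f(z)`. Then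
`t B A + 1/t - A - B = (A t - 1)(B t - 1) / t`, which is nonnegative because `A t ≥ 1` and
`B ≥ A`. Since `-log(1 - z) > z` gives `t > 1 - z`, replacing `1/t` by `1/(1 - z)` makes the
inequality strict.
-/

open Real

lemma one_sub_lt_neg_log_one_sub_mul_one_sub_div {z : ℝ} (hz : z ∈ Set.Ioo (0 : ℝ) 1) :
    1 - z < -log (1 - z) * (1 - z) / z := by
  obtain ⟨hz0, hz1⟩ := hz
  have hlog : log (1 - z) < -z := by
    have := log_lt_sub_one_of_pos (sub_pos.2 hz1) (by linarith)
    linarith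
  rw [lt_div_iff₀ hz0]
  nlinarith

lemma add_le_mul_mul_add_inv {A B t : ℝ} (ht : 0 < t) (hAt : 1 ≤ A * t) (hAB : A ≤ B) :
    A + B ≤ t * B * A + t⁻¹ := by
  have hBt : 1 ≤ B * t := hAt.trans (by gcongr)
  have hprod : 0 ≤ (A * t - 1) * (B * t - 1) := mul_nonneg (by linarith) (by linarith)
  calc A + B = ((A + B) * t) * t⁻¹ := by field_simp
    _ ≤ (t * B * A * t + 1) * t⁻¹ := by gcongr; nlinarith
    _ = t * B * A + t⁻¹ := by field_simp

theorem stmt_14 : ∀ a b : ℕ, 3 ≤ a → a < b →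
    ∀ z ∈ Set.Ioo (0:ℝ) 1,
      (-Real.log (1 - z)) * (1 - z) / z ≥ 1 / ((a:ℝ) - 1) →
      (-Real.log (1 - z)) * (1 - z) / z * ((b:ℝ) - 1) * ((a:ℝ) - 1)
        + 1 / (1 - z) + 2 - b - a > 0 := by
  intro a b ha hab z hz hf
  set t := -log (1 - z) * (1 - z) / z
  have hA : (0 : ℝ) < (a : ℝ) - 1 := by
    have : (3 : ℝ) ≤ a := by exact_mod_cast ha
    linarith
  have hAB : (a : ℝ) - 1 ≤ (b : ℝ) - 1 := by
    have : (a : ℝ) ≤ b := by exact_mod_cast hab.le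
    linarith
  have hzt : 1 - z < t := one_sub_lt_neg_log_one_sub_mul_one_sub_div hz
  have h1z : 0 < 1 - z := sub_pos.2 hz.2
  have hAt : 1 ≤ ((a : ℝ) - 1) * t := by rwa [ge_iff_le, div_le_iff₀' hA] at hf
  have hkey := add_le_mul_mul_add_inv (h1z.trans hzt) hAt hAB
  have hinv : t⁻¹ < 1 / (1 - z) := by rw [one_div]; exact inv_strictAnti₀ h1z hzt
  linarith
end

section
/- Let 3 ≤ a < b be integers, f(z) = (-ln(1-z))·(1-z)/z, and g(z) = f(z)·(b-1)·(a-1) + 1/(1-z) + 2 - b - a. If z ∈ (0,1) satisfies f(z) ≤ 1/(b-1), then g(z) > 0. -/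
theorem stmt_15 : ∀ a b : ℕ, 3 ≤ a → a < b →
    ∀ z ∈ Set.Ioo (0:ℝ) 1,
      (-Real.log (1 - z)) * (1 - z) / z ≤ 1 / ((b:ℝ) - 1) →
      (-Real.log (1 - z)) * (1 - z) / z * ((b:ℝ) - 1) * ((a:ℝ) - 1)
        + 1 / (1 - z) + 2 - b - a > 0 := by
  intro a b ha hab z hz hF
  obtain ⟨hz0, hz1⟩ := hz
  set F := (-Real.log (1 - z)) * (1 - z) / z with hFdef
  have hA : (3:ℝ) ≤ (a:ℝ) := by exact_mod_cast ha
  have hB : (a:ℝ) + 1 ≤ (b:ℝ) := by exact_mod_cast hab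
  have h1z : 0 < 1 - z := by linarith
  -- -log(1-z) > z
  have hlog : z < -Real.log (1 - z) := by
    have h := Real.add_one_lt_exp (x := -z) (by linarith : (-z) ≠ 0)
    have : Real.log (1 - z) < -z := by
      have := Real.log_lt_log (by linarith : (0:ℝ) < 1 - z) (by linarith : (1 - z) < Real.exp (-z))
      rwa [Real.log_exp] at this
    linarith
  have hF1z : 1 - z < F := by
    rw [hFdef, lt_div_iff₀ hz0]
    nlinarith
  have hFpos : 0 < F := lt_trans h1z hF1z
  have hBpos : (0:ℝ) < (b:ℝ) - 1 := by linarith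
  have hFB : F * ((b:ℝ) - 1) ≤ 1 := by
    have := (le_div_iff₀ hBpos).mp hF
    linarith
  have hFA : F * ((a:ℝ) - 1) < 1 := by nlinarith
  have hinv : 1 / F < 1 / (1 - z) := by
    apply one_div_lt_one_div_of_lt h1z hF1z
  have hkey : 0 ≤ F * ((b:ℝ) - 1) * ((a:ℝ) - 1) + 1 / F - ((b:ℝ) - 1) - ((a:ℝ) - 1) := by
    have hFinv : F * (1 / F) = 1 := mul_one_div_cancel (ne_of_gt hFpos)
    nlinarith [mul_nonneg (sub_nonneg.mpr hFB) (by linarith : (0:ℝ) ≤ 1 - F * ((a:ℝ) - 1)), hFinv, hFpos]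
  nlinarith
end
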